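/- arXiv:nlin/0412003 — 4 statements merged into one kernel-verified Lean document; each statement's English description precedes it below -/
import Mathlib

section
/- Let α₁, α₂ be real numbers with α₁ ≠ α₂, α₁ + α₂ ≠ 0, α₁ α₂ ≠ 0, and α₁(α₁+α₂) > 0, and set α₃ = 2α₁α₂/(α₁+α₂). Let z₀ ∈ ℝ and define f(z) = 2α₁α₂ / ( α₁ + α₂ + (α₁-α₂) / √(1 + exp( -((α₁-α₂)²/(α₁+α₂)) (z - z₀) )) ). Then f is well-defined (the denominator never vanishes) and satisfies the ordinary differential equation f(z) · f'(z) = -(f(z)-α₁)(f(z)-α₂)(f(z)-α₃) for all z ∈ ℝ. -/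
noncomputable section

/-- the explicit travelling-wave profile is well-defined and
    satisfies `f f' = -(f-α₁)(f-α₂)(f-α₃)`. -/
theorem stmt_1 (α₁ α₂ z₀ : ℝ) (hne : α₁ ≠ α₂) (hsum : α₁ + α₂ ≠ 0)
    (hprod : α₁ * α₂ ≠ 0) (hpos : α₁ * (α₁ + α₂) > 0)
    (α₃ : ℝ) (hα₃ : α₃ = 2 * α₁ * α₂ / (α₁ + α₂))
    (f : ℝ → ℝ)
    (hf : ∀ z, f z = 2 * α₁ * α₂ /
      (α₁ + α₂ + (α₁ - α₂) /
        Real.sqrt (1 + Real.exp (-((α₁ - α₂) ^ 2 / (α₁ + α₂)) * (z - z₀))))) :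
    (∀ z, α₁ + α₂ + (α₁ - α₂) /
        Real.sqrt (1 + Real.exp (-((α₁ - α₂) ^ 2 / (α₁ + α₂)) * (z - z₀))) ≠ 0) ∧
    (∀ z, f z * deriv f z = -((f z - α₁) * (f z - α₂) * (f z - α₃))) := by
  set k : ℝ := (α₁ - α₂) ^ 2 / (α₁ + α₂) with hk
  -- basic facts at each point
  have hEpos : ∀ z : ℝ, (0:ℝ) < Real.exp (-k * (z - z₀)) := fun z => Real.exp_pos _
  have hupos : ∀ z : ℝ, (0:ℝ) < 1 + Real.exp (-k * (z - z₀)) := by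
    intro z; linarith [hEpos z]
  have hs1 : ∀ z : ℝ, 1 < Real.sqrt (1 + Real.exp (-k * (z - z₀))) := by
    intro z
    exact (Real.lt_sqrt (by norm_num)).mpr (by nlinarith [hEpos z])
  have hs0 : ∀ z : ℝ, (0:ℝ) < Real.sqrt (1 + Real.exp (-k * (z - z₀))) := by
    intro z; linarith [hs1 z]
  have hssq : ∀ z : ℝ, (Real.sqrt (1 + Real.exp (-k * (z - z₀)))) ^ 2
      = 1 + Real.exp (-k * (z - z₀)) := by
    intro z; exact Real.sq_sqrt (le_of_lt (hupos z))
  -- denominator is nonzero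
  have hD : ∀ z : ℝ, α₁ + α₂ + (α₁ - α₂) /
      Real.sqrt (1 + Real.exp (-k * (z - z₀))) ≠ 0 := by
    intro z
    set s : ℝ := Real.sqrt (1 + Real.exp (-k * (z - z₀))) with hs
    have h1 : 1 < s := hs1 z
    have h0 : 0 < s := hs0 z
    have hmul : (α₁ + α₂) * (α₁ + α₂ + (α₁ - α₂) / s) > 0 := by
      have ht0 : 0 < 1 / s := by positivity
      have ht1 : 1 / s < 1 := by
        rw [div_lt_one h0]; exact h1
      have hdiv : (α₁ - α₂) / s = (α₁ - α₂) * (1 / s) := by ring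
      rw [hdiv]
      nlinarith [sq_nonneg (α₁ + α₂), hpos, mul_pos hpos ht0,
        mul_pos (mul_pos hpos ht0) (sub_pos.mpr ht1)]
    intro h
    rw [h, mul_zero] at hmul
    exact lt_irrefl 0 hmul
  refine ⟨hD, ?_⟩
  intro z
  -- derivative computation
  set E : ℝ := Real.exp (-k * (z - z₀)) with hE
  set s : ℝ := Real.sqrt (1 + Real.exp (-k * (z - z₀))) with hs
  have h1 : HasDerivAt (fun z : ℝ => -k * (z - z₀)) (-k) z := by
    simpa using ((hasDerivAt_id z).sub_const z₀).const_mul (-k)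
  have h2 : HasDerivAt (fun z : ℝ => Real.exp (-k * (z - z₀))) (E * (-k)) z := h1.exp
  have h3 : HasDerivAt (fun z : ℝ => 1 + Real.exp (-k * (z - z₀))) (E * (-k)) z :=
    h2.const_add 1
  have h4 : HasDerivAt (fun z : ℝ => Real.sqrt (1 + Real.exp (-k * (z - z₀))))
      ((E * (-k)) / (2 * s)) z := h3.sqrt (ne_of_gt (hupos z))
  have h5 : HasDerivAt (fun z : ℝ => (α₁ - α₂) /
      Real.sqrt (1 + Real.exp (-k * (z - z₀))))
      ((0 * s - (α₁ - α₂) * ((E * (-k)) / (2 * s))) / s ^ 2) z :=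
    (hasDerivAt_const z (α₁ - α₂)).div h4 (ne_of_gt (hs0 z))
  have h6 : HasDerivAt (fun z : ℝ => α₁ + α₂ + (α₁ - α₂) /
      Real.sqrt (1 + Real.exp (-k * (z - z₀))))
      ((0 * s - (α₁ - α₂) * ((E * (-k)) / (2 * s))) / s ^ 2) z := h5.const_add (α₁ + α₂)
  have hfe : f = fun z : ℝ => 2 * α₁ * α₂ / (α₁ + α₂ + (α₁ - α₂) /
      Real.sqrt (1 + Real.exp (-k * (z - z₀)))) := funext hf
  set D : ℝ := α₁ + α₂ + (α₁ - α₂) / s with hDdef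
  have hDne : D ≠ 0 := hD z
  have h7 : HasDerivAt f
      ((0 * D - 2 * α₁ * α₂ * ((0 * s - (α₁ - α₂) * ((E * (-k)) / (2 * s))) / s ^ 2))
        / D ^ 2) z := by
    rw [hfe]
    exact (hasDerivAt_const z (2 * α₁ * α₂)).div h6 hDne
  have hderiv : deriv f z =
      (0 * D - 2 * α₁ * α₂ * ((0 * s - (α₁ - α₂) * ((E * (-k)) / (2 * s))) / s ^ 2))
        / D ^ 2 := h7.deriv
  -- now the algebra
  have hfz : f z = 2 * α₁ * α₂ / D := hf z
  have hEs : E = s ^ 2 - 1 := by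
    rw [hssq z]; ring
  have hsne : s ≠ 0 := ne_of_gt (hs0 z)
  have hDs : (α₁ + α₂) * s + (α₁ - α₂) ≠ 0 := by
    intro h
    apply hDne
    rw [hDdef]
    field_simp
    linarith [h]
  rw [hfz, hderiv, hα₃, hEs, hk, hDdef]
  field_simp
  ring
end
end

section
/- Let N ≥ 1, let u : ℝ × ℝ → ℝ and U : ℝ × ℝ → ℝ^N be smooth, and suppose they satisfy the system u_t = 2⟨U,U⟩ u_x + 2⟨U,U_{xx}⟩ - ⟨U_x,U_x⟩ - 2⟨U,U⟩² and U_t = U_{xxx} + u_{xx} U + 2 u_x U_x - 2⟨U,U⟩ U_x - 2⟨U,U_x⟩ U. Then ∂_t ( u_x - ⟨U,U⟩ ) = 0, i.e. u_x - ⟨U,U⟩ is independent of t. -/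
noncomputable section

/-- partial derivative in the first (space) variable -/
def pdx (f : ℝ → ℝ → ℝ) : ℝ → ℝ → ℝ := fun x t => deriv (fun y => f y t) x

/-- partial derivative in the second (time) variable -/
def pdt (f : ℝ → ℝ → ℝ) : ℝ → ℝ → ℝ := fun x t => deriv (fun s => f x s) t

/-- smoothness of a function of two real variables -/
def smooth2 (f : ℝ → ℝ → ℝ) : Prop := ContDiff ℝ (⊤ : ℕ∞) (fun p : ℝ × ℝ => f p.1 p.2)

/-- componentwise partial x-derivative of a vector-valued function -/
def pdxV {N : ℕ} (U : ℝ → ℝ → Fin N → ℝ) : ℝ → ℝ → Fin N → ℝ :=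
  fun x t i => deriv (fun y => U y t i) x

/-- componentwise partial t-derivative of a vector-valued function -/
def pdtV {N : ℕ} (U : ℝ → ℝ → Fin N → ℝ) : ℝ → ℝ → Fin N → ℝ :=
  fun x t i => deriv (fun s => U x s i) t

/-- pointwise Euclidean inner product of two vector-valued functions -/
def ip {N : ℕ} (A B : ℝ → ℝ → Fin N → ℝ) : ℝ → ℝ → ℝ :=
  fun x t => ∑ i, A x t i * B x t i

/-- componentwise smoothness of a vector-valued function of two real variables -/
def smooth2V {N : ℕ} (U : ℝ → ℝ → Fin N → ℝ) : Prop :=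
  ∀ i, ContDiff ℝ (⊤ : ℕ∞) (fun p : ℝ × ℝ => U p.1 p.2 i)


lemma sliceX_hasDerivAt {f : ℝ → ℝ → ℝ} (hf : smooth2 f) (x t : ℝ) :
    HasDerivAt (fun y => f y t) (pdx f x t) x := by
  have h : ContDiff ℝ (⊤ : ℕ∞) (fun y : ℝ => f y t) :=
    hf.comp (contDiff_id.prodMk contDiff_const)
  exact (h.differentiable (by simp) x).hasDerivAt

lemma sliceT_hasDerivAt {f : ℝ → ℝ → ℝ} (hf : smooth2 f) (x t : ℝ) :
    HasDerivAt (fun s => f x s) (pdt f x t) t := by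
  have h : ContDiff ℝ (⊤ : ℕ∞) (fun s : ℝ => f x s) :=
    hf.comp (contDiff_const.prodMk contDiff_id)
  exact (h.differentiable (by simp) t).hasDerivAt

lemma pdx_eq_fderiv {f : ℝ → ℝ → ℝ} (hf : smooth2 f) (x t : ℝ) :
    pdx f x t = fderiv ℝ (fun p : ℝ × ℝ => f p.1 p.2) (x, t) (1, 0) := by
  have h1 : HasFDerivAt (fun p : ℝ × ℝ => f p.1 p.2)
      (fderiv ℝ (fun p : ℝ × ℝ => f p.1 p.2) (x, t)) (x, t) :=
    (hf.differentiable (by simp) (x, t)).hasFDerivAt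
  have h2 : HasDerivAt (fun y : ℝ => ((y, t) : ℝ × ℝ)) ((1 : ℝ), (0 : ℝ)) x :=
    (hasDerivAt_id x).prodMk (hasDerivAt_const x t)
  exact (h1.comp_hasDerivAt x h2).deriv

lemma pdt_eq_fderiv {f : ℝ → ℝ → ℝ} (hf : smooth2 f) (x t : ℝ) :
    pdt f x t = fderiv ℝ (fun p : ℝ × ℝ => f p.1 p.2) (x, t) (0, 1) := by
  have h1 : HasFDerivAt (fun p : ℝ × ℝ => f p.1 p.2)
      (fderiv ℝ (fun p : ℝ × ℝ => f p.1 p.2) (x, t)) (x, t) :=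
    (hf.differentiable (by simp) (x, t)).hasFDerivAt
  have h2 : HasDerivAt (fun s : ℝ => ((x, s) : ℝ × ℝ)) ((0 : ℝ), (1 : ℝ)) t :=
    (hasDerivAt_const t x).prodMk (hasDerivAt_id t)
  exact (h1.comp_hasDerivAt t h2).deriv

lemma smooth2_pdx {f : ℝ → ℝ → ℝ} (hf : smooth2 f) : smooth2 (pdx f) := by
  have h : ContDiff ℝ (⊤ : ℕ∞) (fun p : ℝ × ℝ =>
      fderiv ℝ (fun q : ℝ × ℝ => f q.1 q.2) p ((1 : ℝ), (0 : ℝ))) :=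
    (ContinuousLinearMap.apply ℝ ℝ ((1 : ℝ), (0 : ℝ))).contDiff.comp (hf.fderiv_right (by simp))
  have he : (fun p : ℝ × ℝ => pdx f p.1 p.2) = fun p : ℝ × ℝ =>
      fderiv ℝ (fun q : ℝ × ℝ => f q.1 q.2) p ((1 : ℝ), (0 : ℝ)) := by
    funext p; exact pdx_eq_fderiv hf p.1 p.2
  unfold smooth2
  rw [he]; exact h

lemma pdt_pdx_comm {f : ℝ → ℝ → ℝ} (hf : smooth2 f) (x t : ℝ) :
    pdt (pdx f) x t = pdx (pdt f) x t := by
  set F : ℝ × ℝ → ℝ := fun p => f p.1 p.2 with hF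
  have hFd : ∀ p, HasFDerivAt F (fderiv ℝ F p) p :=
    fun p => (hf.differentiable (by simp) p).hasFDerivAt
  have hF' : DifferentiableAt ℝ (fderiv ℝ F) (x, t) :=
    ((hf.fderiv_right (m := (⊤ : ℕ∞)) (by simp)).differentiable (by simp)) (x, t)
  have hsymm := second_derivative_symmetric hFd hF'.hasFDerivAt
  have hxapp : ∀ (v w : ℝ × ℝ),
      fderiv ℝ (fun p => fderiv ℝ F p v) (x, t) w = fderiv ℝ (fderiv ℝ F) (x, t) w v := by
    intro v w
    have comp : HasFDerivAt (fun p => fderiv ℝ F p v)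
        (((ContinuousLinearMap.apply ℝ ℝ v)).comp (fderiv ℝ (fderiv ℝ F) (x, t))) (x, t) :=
      (ContinuousLinearMap.apply ℝ ℝ v).hasFDerivAt.comp (x, t) hF'.hasFDerivAt
    rw [comp.fderiv]; rfl
  have hpx : smooth2 (pdx f) := smooth2_pdx hf
  have hpt : smooth2 (pdt f) := by
    have h : ContDiff ℝ (⊤ : ℕ∞) (fun p : ℝ × ℝ =>
        fderiv ℝ F p ((0 : ℝ), (1 : ℝ))) :=
      (ContinuousLinearMap.apply ℝ ℝ ((0 : ℝ), (1 : ℝ))).contDiff.comp (hf.fderiv_right (by simp))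
    have he : (fun p : ℝ × ℝ => pdt f p.1 p.2) = fun p : ℝ × ℝ =>
        fderiv ℝ F p ((0 : ℝ), (1 : ℝ)) := by
      funext p; exact pdt_eq_fderiv hf p.1 p.2
    unfold smooth2; rw [he]; exact h
  rw [pdt_eq_fderiv hpx x t, pdx_eq_fderiv hpt x t]
  have e1 : (fun p : ℝ × ℝ => pdx f p.1 p.2) = fun p : ℝ × ℝ =>
      fderiv ℝ F p ((1 : ℝ), (0 : ℝ)) := by
    funext p; exact pdx_eq_fderiv hf p.1 p.2
  have e2 : (fun p : ℝ × ℝ => pdt f p.1 p.2) = fun p : ℝ × ℝ =>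
      fderiv ℝ F p ((0 : ℝ), (1 : ℝ)) := by
    funext p; exact pdt_eq_fderiv hf p.1 p.2
  rw [e1, e2, hxapp, hxapp, hsymm]


lemma smooth2V.comp {N : ℕ} {A : ℝ → ℝ → Fin N → ℝ} (hA : smooth2V A) (i : Fin N) :
    smooth2 (fun x t => A x t i) := hA i

lemma smooth2V_pdxV {N : ℕ} {A : ℝ → ℝ → Fin N → ℝ} (hA : smooth2V A) :
    smooth2V (pdxV A) := fun i => smooth2_pdx (f := fun x t => A x t i) (hA i)

lemma sliceXV_hasDerivAt {N : ℕ} {A : ℝ → ℝ → Fin N → ℝ} (hA : smooth2V A) (x t : ℝ)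
    (i : Fin N) : HasDerivAt (fun y => A y t i) (pdxV A x t i) x :=
  sliceX_hasDerivAt (f := fun x t => A x t i) (hA i) x t

lemma sliceTV_hasDerivAt {N : ℕ} {A : ℝ → ℝ → Fin N → ℝ} (hA : smooth2V A) (x t : ℝ)
    (i : Fin N) : HasDerivAt (fun s => A x s i) (pdtV A x t i) t :=
  sliceT_hasDerivAt (f := fun x t => A x t i) (hA i) x t

lemma smooth2_ip {N : ℕ} {A B : ℝ → ℝ → Fin N → ℝ} (hA : smooth2V A) (hB : smooth2V B) :
    smooth2 (ip A B) := by
  unfold smooth2 ip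
  exact ContDiff.sum fun i _ => (hA i).mul (hB i)

lemma ip_comm {N : ℕ} (A B : ℝ → ℝ → Fin N → ℝ) (x t : ℝ) : ip A B x t = ip B A x t :=
  Finset.sum_congr rfl fun i _ => mul_comm _ _

lemma hasDerivAt_ip_x {N : ℕ} {A B : ℝ → ℝ → Fin N → ℝ} (hA : smooth2V A) (hB : smooth2V B)
    (x t : ℝ) : HasDerivAt (fun y => ip A B y t)
      (ip (pdxV A) B x t + ip A (pdxV B) x t) x := by
  have h : ∀ i ∈ Finset.univ, HasDerivAt (fun y => A y t i * B y t i)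
      (pdxV A x t i * B x t i + A x t i * pdxV B x t i) x := fun i _ =>
    (sliceXV_hasDerivAt hA x t i).mul (sliceXV_hasDerivAt hB x t i)
  have := HasDerivAt.fun_sum h
  simpa [ip, Finset.sum_add_distrib] using this

lemma hasDerivAt_ip_t {N : ℕ} {A B : ℝ → ℝ → Fin N → ℝ} (hA : smooth2V A) (hB : smooth2V B)
    (x t : ℝ) : HasDerivAt (fun s => ip A B x s)
      (ip (pdtV A) B x t + ip A (pdtV B) x t) t := by
  have h : ∀ i ∈ Finset.univ, HasDerivAt (fun s => A x s i * B x s i)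
      (pdtV A x t i * B x t i + A x t i * pdtV B x t i) t := fun i _ =>
    (sliceTV_hasDerivAt hA x t i).mul (sliceTV_hasDerivAt hB x t i)
  have := HasDerivAt.fun_sum h
  simpa [ip, Finset.sum_add_distrib] using this

/-- for system (4.13), the quantity `u_x - ⟨U,U⟩` is independent of t. -/
theorem stmt_2 {N : ℕ} (hN : 1 ≤ N) (u : ℝ → ℝ → ℝ) (U : ℝ → ℝ → Fin N → ℝ)
    (hu : smooth2 u) (hU : smooth2V U)
    (heq1 : ∀ x t, pdt u x t =
      2 * ip U U x t * pdx u x t + 2 * ip U (pdxV (pdxV U)) x t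
      - ip (pdxV U) (pdxV U) x t - 2 * (ip U U x t) ^ 2)
    (heq2 : ∀ x t i, pdtV U x t i =
      pdxV (pdxV (pdxV U)) x t i + pdx (pdx u) x t * U x t i
      + 2 * pdx u x t * pdxV U x t i
      - 2 * ip U U x t * pdxV U x t i - 2 * ip U (pdxV U) x t * U x t i) :
    ∀ x t, pdt (fun x t => pdx u x t - ip U U x t) x t = 0 := by
  intro x t
  have hUx : smooth2V (pdxV U) := smooth2V_pdxV hU
  have hUxx : smooth2V (pdxV (pdxV U)) := smooth2V_pdxV hUx
  have hUxxx : smooth2V (pdxV (pdxV (pdxV U))) := smooth2V_pdxV hUxx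
  have hpu : smooth2 (pdx u) := smooth2_pdx hu
  -- split the outer time derivative
  have hL : pdt (fun x t => pdx u x t - ip U U x t) x t
      = pdt (pdx u) x t - pdt (ip U U) x t := by
    have h1 := sliceT_hasDerivAt hpu x t
    have h2 := sliceT_hasDerivAt (smooth2_ip hU hU) x t
    exact (h1.sub h2).deriv
  -- swap mixed partials
  have hswap : pdt (pdx u) x t = pdx (pdt u) x t := pdt_pdx_comm hu x t
  -- compute pdx (pdt u)
  have a1 := hasDerivAt_ip_x hU hU x t
  have a2 := sliceX_hasDerivAt hpu x t
  have a3 := hasDerivAt_ip_x hU hUxx x t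
  have a4 := hasDerivAt_ip_x hUx hUx x t
  have hfun : (fun y => pdt u y t) = (fun y =>
      2 * ip U U y t * pdx u y t + 2 * ip U (pdxV (pdxV U)) y t
      - ip (pdxV U) (pdxV U) y t - 2 * (ip U U y t * ip U U y t)) :=
    funext fun y => by rw [heq1]; ring
  have H : HasDerivAt (fun y =>
      2 * ip U U y t * pdx u y t + 2 * ip U (pdxV (pdxV U)) y t
      - ip (pdxV U) (pdxV U) y t - 2 * (ip U U y t * ip U U y t))
      (2 * (ip (pdxV U) U x t + ip U (pdxV U) x t) * pdx u x t
        + 2 * ip U U x t * pdx (pdx u) x t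
        + 2 * (ip (pdxV U) (pdxV (pdxV U)) x t + ip U (pdxV (pdxV (pdxV U))) x t)
        - (ip (pdxV (pdxV U)) (pdxV U) x t + ip (pdxV U) (pdxV (pdxV U)) x t)
        - 2 * ((ip (pdxV U) U x t + ip U (pdxV U) x t) * ip U U x t
            + ip U U x t * (ip (pdxV U) U x t + ip U (pdxV U) x t))) x := by
    exact ((((a1.const_mul 2).mul a2).add (a3.const_mul 2)).sub a4).sub
      ((a1.mul a1).const_mul 2)
  have hx : pdx (pdt u) x t =
      2 * (ip (pdxV U) U x t + ip U (pdxV U) x t) * pdx u x t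
        + 2 * ip U U x t * pdx (pdx u) x t
        + 2 * (ip (pdxV U) (pdxV (pdxV U)) x t + ip U (pdxV (pdxV (pdxV U))) x t)
        - (ip (pdxV (pdxV U)) (pdxV U) x t + ip (pdxV U) (pdxV (pdxV U)) x t)
        - 2 * ((ip (pdxV U) U x t + ip U (pdxV U) x t) * ip U U x t
            + ip U U x t * (ip (pdxV U) U x t + ip U (pdxV U) x t)) := by
    show deriv (fun y => pdt u y t) x = _
    rw [hfun]
    exact H.deriv
  -- compute pdt (ip U U)
  have ht : pdt (ip U U) x t = ip (pdtV U) U x t + ip U (pdtV U) x t :=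
    (hasDerivAt_ip_t hU hU x t).deriv
  have hexp : ip U (pdtV U) x t =
      ip U (pdxV (pdxV (pdxV U))) x t + pdx (pdx u) x t * ip U U x t
      + 2 * pdx u x t * ip U (pdxV U) x t
      - 2 * ip U U x t * ip U (pdxV U) x t - 2 * ip U (pdxV U) x t * ip U U x t := by
    have step : ∀ i ∈ Finset.univ, U x t i * pdtV U x t i =
        U x t i * pdxV (pdxV (pdxV U)) x t i
        + pdx (pdx u) x t * (U x t i * U x t i)
        + 2 * pdx u x t * (U x t i * pdxV U x t i)
        - 2 * ip U U x t * (U x t i * pdxV U x t i)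
        - 2 * ip U (pdxV U) x t * (U x t i * U x t i) := fun i _ => by
      rw [heq2]; ring
    show (∑ i, U x t i * pdtV U x t i) = _
    rw [Finset.sum_congr rfl step]
    simp only [Finset.sum_add_distrib, Finset.sum_sub_distrib, ← Finset.mul_sum]
    rfl
  rw [hL, hswap, hx, ht, ip_comm (pdtV U) U x t, hexp,
    ip_comm (pdxV U) U x t, ip_comm (pdxV (pdxV U)) (pdxV U) x t]
  ring
end
end

section
/- Let N ≥ 1, a ∈ ℝ, and let u : ℝ × ℝ → ℝ, U : ℝ × ℝ → ℝ^N be smooth solutions of the system u_t = (1/3)(1+2a)(u_{xx} + 2uu_x) + (4/3)⟨U,U_x⟩ and U_t = U_{xx} + (1/3)(1-a)u_xU + uU_x + (1/12)(1-4a)u²U - (1/3)⟨U,U⟩U. Suppose v : ℝ × ℝ → ℝ is smooth with v_x = u and v_t = (1/3)(1+2a)(u_x + u²) + (2/3)⟨U,U⟩. Define w := exp(v) and W := U·exp(v/2). Then w_t = (1/3)(1+2a)w_{xx} + (2/3)⟨W,W⟩ and W_t = W_{xx}. -/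
noncomputable section

lemma sliceX (f : ℝ → ℝ → ℝ) (hf : ContDiff ℝ (⊤ : ℕ∞) (fun p : ℝ × ℝ => f p.1 p.2)) (t : ℝ) :
    ContDiff ℝ (⊤ : ℕ∞) (fun y => f y t) := hf.comp (contDiff_id.prodMk contDiff_const)

lemma sliceT (f : ℝ → ℝ → ℝ) (hf : ContDiff ℝ (⊤ : ℕ∞) (fun p : ℝ × ℝ => f p.1 p.2)) (x : ℝ) :
    ContDiff ℝ (⊤ : ℕ∞) (fun s => f x s) := hf.comp (contDiff_const.prodMk contDiff_id)

lemma derivDiff (f : ℝ → ℝ) (hf : ContDiff ℝ (⊤ : ℕ∞) f) : Differentiable ℝ (deriv f) := by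
  have h : ContDiff ℝ (↑(⊤ : ℕ∞)) f := hf.of_le (by simp)
  exact ((contDiff_infty_iff_deriv.mp h).2).differentiable (by simp)

lemma fDiff (f : ℝ → ℝ) (hf : ContDiff ℝ (⊤ : ℕ∞) f) : Differentiable ℝ f :=
  hf.differentiable (by simp)

/-- the extended Hopf–Cole transformation triangular-linearizes
    system (4.3). -/
theorem stmt_11 {N : ℕ} (hN : 1 ≤ N) (a : ℝ)
    (u : ℝ → ℝ → ℝ) (U : ℝ → ℝ → Fin N → ℝ)
    (hu : smooth2 u) (hU : smooth2V U)
    (heq1 : ∀ x t, pdt u x t =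
      (1/3) * (1 + 2*a) * (pdx (pdx u) x t + 2 * u x t * pdx u x t)
      + (4/3) * ip U (pdxV U) x t)
    (heq2 : ∀ x t i, pdtV U x t i = pdxV (pdxV U) x t i
      + (1/3) * (1 - a) * pdx u x t * U x t i + u x t * pdxV U x t i
      + (1/12) * (1 - 4*a) * (u x t) ^ 2 * U x t i
      - (1/3) * ip U U x t * U x t i)
    (v : ℝ → ℝ → ℝ) (hv : smooth2 v)
    (hvx : ∀ x t, pdx v x t = u x t)
    (hvt : ∀ x t, pdt v x t =
      (1/3) * (1 + 2*a) * (pdx u x t + (u x t) ^ 2) + (2/3) * ip U U x t)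
    (w : ℝ → ℝ → ℝ) (W : ℝ → ℝ → Fin N → ℝ)
    (hw : ∀ x t, w x t = Real.exp (v x t))
    (hW : ∀ x t i, W x t i = U x t i * Real.exp (v x t / 2)) :
    (∀ x t, pdt w x t = (1/3) * (1 + 2*a) * pdx (pdx w) x t + (2/3) * ip W W x t) ∧
    (∀ x t i, pdtV W x t i = pdxV (pdxV W) x t i) := by
  -- basic HasDerivAt facts for x-slices
  have hvX : ∀ x t, HasDerivAt (fun y => v y t) (u x t) x := by
    intro x t
    have h := ((fDiff _ (sliceX v hv t)) x).hasDerivAt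
    rwa [show deriv (fun y => v y t) x = u x t from hvx x t] at h
  have hvT : ∀ x t, HasDerivAt (fun s => v x s) (pdt v x t) t := fun x t =>
    ((fDiff _ (sliceT v hv x)) t).hasDerivAt
  have huX : ∀ x t, HasDerivAt (fun y => u y t) (pdx u x t) x := fun x t =>
    ((fDiff _ (sliceX u hu t)) x).hasDerivAt
  have hUX : ∀ x t i, HasDerivAt (fun y => U y t i) (pdxV U x t i) x := fun x t i =>
    ((fDiff _ (sliceX (fun x t => U x t i) (hU i) t)) x).hasDerivAt
  have hUT : ∀ x t i, HasDerivAt (fun s => U x s i) (pdtV U x t i) t := fun x t i =>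
    ((fDiff _ (sliceT (fun x t => U x t i) (hU i) x)) t).hasDerivAt
  have hUXX : ∀ x t i, HasDerivAt (fun y => pdxV U y t i) (pdxV (pdxV U) x t i) x := fun x t i =>
    ((derivDiff _ (sliceX (fun x t => U x t i) (hU i) t)) x).hasDerivAt
  -- exp slices
  have hEX : ∀ x t, HasDerivAt (fun y => Real.exp (v y t / 2))
      (Real.exp (v x t / 2) * (u x t / 2)) x := fun x t => ((hvX x t).div_const 2).exp
  -- w derivatives
  have hwx : ∀ x t, pdx w x t = u x t * w x t := by
    intro x t
    have : (fun y => w y t) = fun y => Real.exp (v y t) := funext fun y => hw y t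
    rw [pdx, this, ((hvX x t).exp).deriv, hw, mul_comm]
  have hwxx : ∀ x t, pdx (pdx w) x t = (pdx u x t + (u x t) ^ 2) * w x t := by
    intro x t
    have h1 : (fun y => pdx w y t) = fun y => u y t * Real.exp (v y t) := by
      funext y; rw [hwx y t, hw]
    have h2 : HasDerivAt (fun y => u y t * Real.exp (v y t))
        (pdx u x t * Real.exp (v x t) + u x t * (Real.exp (v x t) * u x t)) x :=
      (huX x t).mul ((hvX x t).exp)
    rw [show pdx (pdx w) x t = deriv (fun y => pdx w y t) x from rfl, h1, h2.deriv, hw]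
    ring
  have hwt : ∀ x t, pdt w x t = pdt v x t * w x t := by
    intro x t
    have : (fun s => w x s) = fun s => Real.exp (v x s) := funext fun s => hw x s
    rw [pdt, this, ((hvT x t).exp).deriv, hw, mul_comm]
  -- ip W W
  have hipW : ∀ x t, ip W W x t = ip U U x t * w x t := by
    intro x t
    rw [ip, ip, hw, Finset.sum_mul]
    refine Finset.sum_congr rfl fun i _ => ?_
    have he : Real.exp (v x t / 2) * Real.exp (v x t / 2) = Real.exp (v x t) := by
      rw [← Real.exp_add]; ring_nf
    rw [hW, mul_mul_mul_comm, he]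
  -- W derivatives
  have hWt : ∀ x t i, pdtV W x t i =
      (pdtV U x t i + pdt v x t / 2 * U x t i) * Real.exp (v x t / 2) := by
    intro x t i
    have h1 : (fun s => W x s i) = fun s => U x s i * Real.exp (v x s / 2) :=
      funext fun s => hW x s i
    have h2 : HasDerivAt (fun s => U x s i * Real.exp (v x s / 2))
        (pdtV U x t i * Real.exp (v x t / 2)
          + U x t i * (Real.exp (v x t / 2) * (pdt v x t / 2))) t :=
      (hUT x t i).mul (((hvT x t).div_const 2).exp)
    rw [pdtV, h1, h2.deriv]; ring
  have hWx : ∀ x t i, pdxV W x t i =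
      (pdxV U x t i + u x t / 2 * U x t i) * Real.exp (v x t / 2) := by
    intro x t i
    have h1 : (fun y => W y t i) = fun y => U y t i * Real.exp (v y t / 2) :=
      funext fun y => hW y t i
    have h2 : HasDerivAt (fun y => U y t i * Real.exp (v y t / 2))
        (pdxV U x t i * Real.exp (v x t / 2)
          + U x t i * (Real.exp (v x t / 2) * (u x t / 2))) x :=
      (hUX x t i).mul (hEX x t)
    rw [pdxV, h1, h2.deriv]; ring
  have hWxx : ∀ x t i, pdxV (pdxV W) x t i =
      (pdxV (pdxV U) x t i + u x t * pdxV U x t i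
        + (pdx u x t / 2 + (u x t) ^ 2 / 4) * U x t i) * Real.exp (v x t / 2) := by
    intro x t i
    have h1 : (fun y => pdxV W y t i)
        = fun y => (pdxV U y t i + u y t / 2 * U y t i) * Real.exp (v y t / 2) :=
      funext fun y => hWx y t i
    have h2 : HasDerivAt
        (fun y => (pdxV U y t i + u y t / 2 * U y t i) * Real.exp (v y t / 2))
        ((pdxV (pdxV U) x t i + (pdx u x t / 2 * U x t i + u x t / 2 * pdxV U x t i))
            * Real.exp (v x t / 2)
          + (pdxV U x t i + u x t / 2 * U x t i)
            * (Real.exp (v x t / 2) * (u x t / 2))) x :=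
      ((hUXX x t i).add (((huX x t).div_const 2).mul (hUX x t i))).mul (hEX x t)
    rw [show pdxV (pdxV W) x t i = deriv (fun y => pdxV W y t i) x from rfl, h1, h2.deriv]
    ring
  constructor
  · intro x t
    rw [hwt, hwxx, hipW, hvt]
    ring
  · intro x t i
    rw [hWt, hWxx, heq2, hvt]
    ring
end
end

section
/- Let N ≥ 1 and let u : ℝ × ℝ → ℝ, U : ℝ × ℝ → ℝ^N be smooth solutions of u_t = -2⟨U,U_{xx}⟩ - 2u³⟨U,U⟩ - 6u²⟨U,U⟩² - 6u⟨U,U⟩³ - 2⟨U,U⟩⁴ and U_t = U_{xx} + u³U + 3u²⟨U,U⟩U + 3u⟨U,U⟩²U + ⟨U,U⟩³U. Then ∂_t( u + ⟨U,U⟩ ) = 0, and writing φ(x) := u(x,t) + ⟨U,U⟩(x,t) (independent of t), U satisfies the linear equation U_t = U_{xx} + φ³ U. -/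
noncomputable section

/-- for system (7.4), `u + ⟨U,U⟩` is conserved and `U` satisfies a
    linear Schrödinger-type equation with t-independent potential `φ³`. -/
theorem stmt_13 {N : ℕ} (hN : 1 ≤ N) (u : ℝ → ℝ → ℝ) (U : ℝ → ℝ → Fin N → ℝ)
    (hu : smooth2 u) (hU : smooth2V U)
    (heq1 : ∀ x t, pdt u x t = -2 * ip U (pdxV (pdxV U)) x t
      - 2 * (u x t) ^ 3 * ip U U x t - 6 * (u x t) ^ 2 * (ip U U x t) ^ 2
      - 6 * u x t * (ip U U x t) ^ 3 - 2 * (ip U U x t) ^ 4)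
    (heq2 : ∀ x t i, pdtV U x t i = pdxV (pdxV U) x t i
      + (u x t) ^ 3 * U x t i + 3 * (u x t) ^ 2 * ip U U x t * U x t i
      + 3 * u x t * (ip U U x t) ^ 2 * U x t i + (ip U U x t) ^ 3 * U x t i) :
    (∀ x t, pdt (fun x t => u x t + ip U U x t) x t = 0) ∧
    (∀ φ : ℝ → ℝ, (∀ x t, φ x = u x t + ip U U x t) →
      ∀ x t i, pdtV U x t i = pdxV (pdxV U) x t i + (φ x) ^ 3 * U x t i) := by
  have hdu : ∀ x t, HasDerivAt (fun s => u x s) (pdt u x t) t := by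
    intro x t
    have : DifferentiableAt ℝ (fun s => u x s) t := by
      have : ContDiff ℝ (⊤ : ℕ∞) (fun s : ℝ => u x s) :=
        hu.comp (contDiff_const.prodMk contDiff_id)
      exact (this.differentiable (by simp)) t
    exact this.hasDerivAt
  have hdU : ∀ x t i, HasDerivAt (fun s => U x s i) (pdtV U x t i) t := by
    intro x t i
    have : DifferentiableAt ℝ (fun s => U x s i) t := by
      have : ContDiff ℝ (⊤ : ℕ∞) (fun s : ℝ => U x s i) :=
        (hU i).comp (contDiff_const.prodMk contDiff_id)
      exact (this.differentiable (by simp)) t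
    exact this.hasDerivAt
  constructor
  · intro x t
    set q := ip U U x t with hq
    have hsum : HasDerivAt (fun s => u x s + ∑ i, U x s i * U x s i)
        (pdt u x t + ∑ i, (pdtV U x t i * U x t i + U x t i * pdtV U x t i)) t := by
      apply (hdu x t).add
      exact HasDerivAt.fun_sum fun i _ => (hdU x t i).mul (hdU x t i)
    have hval : pdt (fun x t => u x t + ip U U x t) x t
        = pdt u x t + ∑ i, (pdtV U x t i * U x t i + U x t i * pdtV U x t i) := by
      simpa [pdt, ip] using hsum.deriv
    rw [hval]
    have hs : ∑ i, (pdtV U x t i * U x t i + U x t i * pdtV U x t i)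
        = 2 * ip U (pdxV (pdxV U)) x t
          + 2 * ((u x t) ^ 3 + 3 * (u x t) ^ 2 * q + 3 * u x t * q ^ 2 + q ^ 3) * q := by
      have : ∀ i ∈ Finset.univ, pdtV U x t i * U x t i + U x t i * pdtV U x t i
          = 2 * (U x t i * pdxV (pdxV U) x t i)
            + 2 * ((u x t) ^ 3 + 3 * (u x t) ^ 2 * q + 3 * u x t * q ^ 2 + q ^ 3)
              * (U x t i * U x t i) := by
        intro i _
        rw [heq2 x t i, ← hq]
        ring
      rw [Finset.sum_congr rfl this, Finset.sum_add_distrib, ← Finset.mul_sum,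
        ← Finset.mul_sum]
      simp [ip, hq]
    rw [hs, heq1 x t, ← hq]
    ring
  · intro φ hφ x t i
    rw [heq2 x t i, hφ x t]
    ring
end
end
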